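/- For 0 < ℓ, ℓ₀ < 1/2, the Kullback-Leibler divergence between cardioid distributions with the same location μ and concentrations ℓ and ℓ₀ equals 1 − sqrt(1 − 4ℓ²) − (ℓ/ℓ₀)(1 − sqrt(1 − 4ℓ₀²)) + log ℓ − log ℓ₀ + (1/2) log((1 + sqrt(1 − 4ℓ²))/(1 − sqrt(1 − 4ℓ²))) − (1/2) log((1 + sqrt(1 − 4ℓ₀²))/(1 − sqrt(1 − 4ℓ₀²))). -/

import Mathlib

open Real MeasureTheory

/-- Cardioid density. -/
noncomputable def cardioidDensity (μ ℓ x : ℝ) : ℝ :=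
  (1 + 2 * ℓ * Real.cos (x - μ)) / (2 * Real.pi)

/-!
With `s = √(1 - 4ℓ²)` and `r = 2ℓ / (1 + s) ∈ (-1, 1)` one has
`1 + 2ℓ cos t = (1 + s) / 2 * |1 + r e^{it}|²`, so after translating by `μ` the divergence reduces
to the integrals of `log |1 + r e^{it}|` and `cos t * log |1 + r e^{it}|` over a period. On the
unit circle these are `Re (log (1 + r z))` and `Re ((z + z⁻¹) log (1 + r z)) / 2`, and `log (1 + r z)`
and `z log (1 + r z) + dslope (log (1 + r ·)) 0 z` are holomorphic on the closed unit disc, so the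
mean value property evaluates their averages as `0` and `r`.
-/

open Metric

section LogOneAddMul

variable {a : ℂ}

lemma differentiableOn_log_one_add_mul (ha : ‖a‖ < 1) :
    DifferentiableOn ℂ (fun z => Complex.log (1 + a * z)) (closedBall 0 1) := by
  intro z hz
  have haz : ‖a * z‖ < 1 := by
    rw [norm_mul]
    exact (mul_le_of_le_one_right (norm_nonneg a) (by simpa using hz)).trans_lt ha
  exact ((differentiableAt_id.const_mul a).const_add 1).clog
    (Complex.mem_slitPlane_of_norm_lt_one haz) |>.differentiableWithinAt

lemma hasDerivAt_log_one_add_mul_zero (a : ℂ) :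
    HasDerivAt (fun z => Complex.log (1 + a * z)) a 0 := by
  simpa using (((hasDerivAt_id (0 : ℂ)).const_mul a).const_add 1).clog (by simp)

lemma circleAverage_log_one_add_mul (ha : ‖a‖ < 1) :
    circleAverage (fun z => Complex.log (1 + a * z)) 0 1 = 0 := by
  rw [((differentiableOn_log_one_add_mul ha).diffContOnCl_ball
    (R := |1|) (by rw [abs_one])).circleAverage]
  simp

lemma circleAverage_add_inv_mul_log_one_add_mul (ha : ‖a‖ < 1) :
    circleAverage (fun z => (z + z⁻¹) * Complex.log (1 + a * z)) 0 1 = a := by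
  set L : ℂ → ℂ := fun z => Complex.log (1 + a * z)
  have hL := differentiableOn_log_one_add_mul ha
  have hg : DifferentiableOn ℂ (fun z => z * L z + dslope L 0 z) (closedBall 0 1) :=
    (differentiableOn_id.mul hL).add
      ((Complex.differentiableOn_dslope (closedBall_mem_nhds 0 one_pos)).2 hL)
  calc circleAverage (fun z => (z + z⁻¹) * L z) 0 1
      = circleAverage (fun z => z * L z + dslope L 0 z) 0 1 := by
        refine circleAverage_congr_sphere fun z hz => ?_
        have hz0 : z ≠ 0 := by rintro rfl; simp at hz
        simp [dslope_of_ne _ hz0, slope_def_field, L, add_mul, div_eq_inv_mul]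
    _ = a := by
        rw [(hg.diffContOnCl_ball (R := |1|) (by rw [abs_one])).circleAverage, dslope_same,
          (hasDerivAt_log_one_add_mul_zero a).deriv]
        simp [L]

end LogOneAddMul

lemma norm_one_add_mul_circleMap_sq (r θ : ℝ) :
    ‖1 + r * circleMap 0 1 θ‖ ^ 2 = 1 + r ^ 2 + 2 * r * cos θ := by
  rw [Complex.sq_norm, Complex.normSq_apply]
  simp [circleMap_zero, Complex.exp_ofReal_mul_I_re, Complex.exp_ofReal_mul_I_im]
  nlinarith [sin_sq_add_cos_sq θ]

lemma log_one_add_sq_add_mul_cos (r θ : ℝ) :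
    log (1 + r ^ 2 + 2 * r * cos θ) = 2 * (Complex.log (1 + r * circleMap 0 1 θ)).re := by
  rw [Complex.log_re, ← norm_one_add_mul_circleMap_sq, Real.log_pow]
  norm_num

lemma circleMap_add_inv (θ : ℝ) :
    circleMap 0 1 θ + (circleMap 0 1 θ)⁻¹ = ((2 * cos θ : ℝ) : ℂ) := by
  rw [circleMap_zero_inv]
  simp [circleMap_zero, Complex.ofReal_cos, Complex.two_cos]

lemma integral_re_comp_circleMap {f : ℂ → ℂ} {c : ℂ} {R : ℝ} (hf : CircleIntegrable f c R) :
    ∫ θ in 0..2 * π, (f (circleMap c R θ)).re = 2 * π * (circleAverage f c R).re := by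
  rw [circleAverage_def, Complex.smul_re, ← Complex.reCLM_apply,
    ← Complex.reCLM.intervalIntegral_comp_comm hf, smul_eq_mul,
    mul_inv_cancel_left₀ (by positivity)]
  rfl

lemma integral_log_one_add_sq_add_mul_cos {r : ℝ} (hr : |r| < 1) :
    ∫ θ in 0..2 * π, log (1 + r ^ 2 + 2 * r * cos θ) = 0 := by
  have hr' : ‖(r : ℂ)‖ < 1 := by simpa using hr
  have hL : CircleIntegrable (fun z => Complex.log (1 + r * z)) 0 1 :=
    ContinuousOn.circleIntegrable zero_le_one
      ((differentiableOn_log_one_add_mul hr').continuousOn.mono sphere_subset_closedBall)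
  simp_rw [log_one_add_sq_add_mul_cos]
  rw [intervalIntegral.integral_const_mul, integral_re_comp_circleMap hL,
    circleAverage_log_one_add_mul hr']
  simp

lemma integral_cos_mul_log_one_add_sq_add_mul_cos {r : ℝ} (hr : |r| < 1) :
    ∫ θ in 0..2 * π, cos θ * log (1 + r ^ 2 + 2 * r * cos θ) = 2 * π * r := by
  have hr' : ‖(r : ℂ)‖ < 1 := by simpa using hr
  have hL : CircleIntegrable (fun z => (z + z⁻¹) * Complex.log (1 + r * z)) 0 1 := by
    refine ContinuousOn.circleIntegrable zero_le_one (ContinuousOn.mul ?_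
      ((differentiableOn_log_one_add_mul hr').continuousOn.mono sphere_subset_closedBall))
    exact continuousOn_id.add (continuousOn_inv₀.mono fun z hz => by rintro rfl; simp at hz)
  have hpt : ∀ θ, cos θ * log (1 + r ^ 2 + 2 * r * cos θ) =
      ((circleMap 0 1 θ + (circleMap 0 1 θ)⁻¹) * Complex.log (1 + r * circleMap 0 1 θ)).re := by
    intro θ
    rw [circleMap_add_inv, Complex.re_ofReal_mul, log_one_add_sq_add_mul_cos]
    ring
  simp_rw [hpt]
  rw [integral_re_comp_circleMap hL, circleAverage_add_inv_mul_log_one_add_mul hr']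
  simp

theorem Function.Periodic.intervalIntegral_comp_sub_eq {E : Type*} [NormedAddCommGroup E]
    [NormedSpace ℝ E] {f : ℝ → E} {T : ℝ} (hf : Function.Periodic f T) (μ : ℝ) :
    ∫ x in 0..T, f (x - μ) = ∫ x in 0..T, f x := by
  rw [intervalIntegral.integral_comp_sub_right, zero_sub, sub_eq_neg_add]
  simpa using hf.intervalIntegral_add_eq (-μ) 0

section CardioidLogIntegrals

variable {ℓ : ℝ}

lemma one_add_two_mul_cos_pos (hℓ : |ℓ| < 1 / 2) (t : ℝ) : 0 < 1 + 2 * ℓ * cos t := by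
  have h : |ℓ * cos t| < 1 / 2 := by
    rw [abs_mul]
    exact (mul_le_of_le_one_right (abs_nonneg ℓ) (abs_cos_le_one t)).trans_lt hℓ
  linarith [neg_abs_le (ℓ * cos t)]

lemma continuous_log_one_add_two_mul_cos (hℓ : |ℓ| < 1 / 2) :
    Continuous fun t => log (1 + 2 * ℓ * cos t) :=
  (by fun_prop : Continuous fun t => 1 + 2 * ℓ * cos t).log
    fun t => (one_add_two_mul_cos_pos hℓ t).ne'

lemma sq_sqrt_one_sub_four_mul_sq (hℓ : |ℓ| < 1 / 2) :
    √(1 - 4 * ℓ ^ 2) ^ 2 = 1 - 4 * ℓ ^ 2 :=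
  Real.sq_sqrt (by nlinarith [sq_abs ℓ, abs_nonneg ℓ])

/-- The root in `(-1, 1)` of `ℓ r² - r + ℓ = 0`, so that `1 + 2ℓ cos t` is proportional to
`1 + r² + 2r cos t = |1 + r e^{it}|²`. -/
noncomputable def cardioidRadius (ℓ : ℝ) : ℝ := 2 * ℓ / (1 + √(1 - 4 * ℓ ^ 2))

lemma abs_cardioidRadius_lt_one (hℓ : |ℓ| < 1 / 2) : |cardioidRadius ℓ| < 1 := by
  have hs := Real.sqrt_nonneg (1 - 4 * ℓ ^ 2)
  have h1s : 0 < 1 + √(1 - 4 * ℓ ^ 2) := by linarith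
  rw [cardioidRadius, abs_div, abs_mul, abs_of_pos h1s, div_lt_one h1s]
  norm_num
  linarith

lemma cardioidRadius_eq (hℓ : |ℓ| < 1 / 2) :
    cardioidRadius ℓ = (1 - √(1 - 4 * ℓ ^ 2)) / (2 * ℓ) := by
  have hs := Real.sqrt_nonneg (1 - 4 * ℓ ^ 2)
  have hsq := sq_sqrt_one_sub_four_mul_sq hℓ
  rcases eq_or_ne ℓ 0 with rfl | hℓ0
  · simp [cardioidRadius]
  rw [cardioidRadius, div_eq_div_iff (by linarith) (by simpa using hℓ0)]
  linear_combination hsq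

lemma one_add_two_mul_cos_eq (hℓ : |ℓ| < 1 / 2) (c : ℝ) :
    1 + 2 * ℓ * c = (1 + √(1 - 4 * ℓ ^ 2)) / 2 *
      (1 + cardioidRadius ℓ ^ 2 + 2 * cardioidRadius ℓ * c) := by
  have hs := Real.sqrt_nonneg (1 - 4 * ℓ ^ 2)
  have hsq := sq_sqrt_one_sub_four_mul_sq hℓ
  rw [cardioidRadius]
  generalize √(1 - 4 * ℓ ^ 2) = s at hs hsq ⊢
  field_simp
  linear_combination -hsq

lemma log_one_add_two_mul_cos_eq (hℓ : |ℓ| < 1 / 2) (t : ℝ) :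
    log (1 + 2 * ℓ * cos t) = log ((1 + √(1 - 4 * ℓ ^ 2)) / 2) +
      log (1 + cardioidRadius ℓ ^ 2 + 2 * cardioidRadius ℓ * cos t) := by
  have hpos := one_add_two_mul_cos_pos hℓ t
  rw [one_add_two_mul_cos_eq hℓ] at hpos ⊢
  have ha : 0 < (1 + √(1 - 4 * ℓ ^ 2)) / 2 := by positivity
  exact Real.log_mul ha.ne' (pos_of_mul_pos_right hpos ha.le).ne'

lemma log_one_add_sq_cardioidRadius_add_mul_cos (hℓ : |ℓ| < 1 / 2) (t : ℝ) :
    log (1 + cardioidRadius ℓ ^ 2 + 2 * cardioidRadius ℓ * cos t) =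
      log (1 + 2 * ℓ * cos t) - log ((1 + √(1 - 4 * ℓ ^ 2)) / 2) := by
  rw [log_one_add_two_mul_cos_eq hℓ]
  ring

theorem integral_log_one_add_two_mul_cos (hℓ : |ℓ| < 1 / 2) :
    ∫ t in 0..2 * π, log (1 + 2 * ℓ * cos t) = 2 * π * log ((1 + √(1 - 4 * ℓ ^ 2)) / 2) := by
  have h := integral_log_one_add_sq_add_mul_cos (abs_cardioidRadius_lt_one hℓ)
  simp_rw [log_one_add_sq_cardioidRadius_add_mul_cos hℓ] at h
  rw [intervalIntegral.integral_sub
    ((continuous_log_one_add_two_mul_cos hℓ).intervalIntegrable _ _) intervalIntegrable_const,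
    intervalIntegral.integral_const, sub_zero, smul_eq_mul, sub_eq_zero] at h
  exact h

theorem integral_cos_mul_log_one_add_two_mul_cos (hℓ : |ℓ| < 1 / 2) :
    ∫ t in 0..2 * π, cos t * log (1 + 2 * ℓ * cos t) =
      2 * π * ((1 - √(1 - 4 * ℓ ^ 2)) / (2 * ℓ)) := by
  have h := integral_cos_mul_log_one_add_sq_add_mul_cos (abs_cardioidRadius_lt_one hℓ)
  have hI : IntervalIntegrable (fun t => cos t * log (1 + 2 * ℓ * cos t)) volume 0 (2 * π) :=
    (continuous_cos.mul (continuous_log_one_add_two_mul_cos hℓ)).intervalIntegrable _ _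
  simp_rw [log_one_add_sq_cardioidRadius_add_mul_cos hℓ, mul_sub] at h
  rw [intervalIntegral.integral_sub hI ((continuous_cos.intervalIntegrable _ _).mul_const _),
    intervalIntegral.integral_mul_const, integral_cos] at h
  simpa [cardioidRadius_eq hℓ] using h

end CardioidLogIntegrals

theorem integral_one_add_two_mul_cos_mul_log (ℓ : ℝ) {ℓ₀ : ℝ} (hℓ₀ : |ℓ₀| < 1 / 2) :
    ∫ t in 0..2 * π, (1 + 2 * ℓ * cos t) * log (1 + 2 * ℓ₀ * cos t) =
      2 * π * (log ((1 + √(1 - 4 * ℓ₀ ^ 2)) / 2) + ℓ / ℓ₀ * (1 - √(1 - 4 * ℓ₀ ^ 2))) := by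
  have hlog := continuous_log_one_add_two_mul_cos hℓ₀
  have hcos : IntervalIntegrable (fun t => 2 * ℓ * (cos t * log (1 + 2 * ℓ₀ * cos t)))
      volume 0 (2 * π) := ((continuous_cos.mul hlog).const_mul _).intervalIntegrable _ _
  have hsplit : ∀ t, (1 + 2 * ℓ * cos t) * log (1 + 2 * ℓ₀ * cos t) =
      log (1 + 2 * ℓ₀ * cos t) + 2 * ℓ * (cos t * log (1 + 2 * ℓ₀ * cos t)) := fun t => by ring
  simp_rw [hsplit]
  rw [intervalIntegral.integral_add (hlog.intervalIntegrable _ _) hcos,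
    intervalIntegral.integral_const_mul, integral_log_one_add_two_mul_cos hℓ₀,
    integral_cos_mul_log_one_add_two_mul_cos hℓ₀]
  ring

lemma cardioidDensity_mul_log_div {ℓ ℓ₀ : ℝ} (hℓ : |ℓ| < 1 / 2) (hℓ₀ : |ℓ₀| < 1 / 2)
    (μ x : ℝ) :
    cardioidDensity μ ℓ x * log (cardioidDensity μ ℓ x / cardioidDensity μ ℓ₀ x) =
      (2 * π)⁻¹ * ((1 + 2 * ℓ * cos (x - μ)) * log (1 + 2 * ℓ * cos (x - μ)) -
        (1 + 2 * ℓ * cos (x - μ)) * log (1 + 2 * ℓ₀ * cos (x - μ))) := by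
  have hp := one_add_two_mul_cos_pos hℓ (x - μ)
  have hq := one_add_two_mul_cos_pos hℓ₀ (x - μ)
  rw [cardioidDensity, cardioidDensity, div_div_div_cancel_right₀ (by positivity),
    Real.log_div hp.ne' hq.ne']
  ring

lemma half_mul_log_one_add_sqrt_div_one_sub_sqrt {ℓ : ℝ} (hℓ0 : ℓ ≠ 0) (hℓ : |ℓ| < 1 / 2) :
    1 / 2 * log ((1 + √(1 - 4 * ℓ ^ 2)) / (1 - √(1 - 4 * ℓ ^ 2))) =
      log ((1 + √(1 - 4 * ℓ ^ 2)) / 2) - log ℓ := by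
  have hs := Real.sqrt_nonneg (1 - 4 * ℓ ^ 2)
  have hsq := sq_sqrt_one_sub_four_mul_sq hℓ
  have hs1 : √(1 - 4 * ℓ ^ 2) < 1 := by nlinarith [sq_abs ℓ, abs_pos.2 hℓ0]
  have hsquare : (1 + √(1 - 4 * ℓ ^ 2)) / (1 - √(1 - 4 * ℓ ^ 2)) =
      ((1 + √(1 - 4 * ℓ ^ 2)) / 2 / ℓ) ^ 2 := by
    field_simp [sub_ne_zero.2 hs1.ne']
    linear_combination hsq
  rw [hsquare, Real.log_pow, Real.log_div (by positivity) hℓ0]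
  push_cast
  ring

theorem cardioid_KLD (μ ℓ ℓ₀ : ℝ) (h0 : 0 < ℓ) (h1 : ℓ < 1/2)
    (h0' : 0 < ℓ₀) (h1' : ℓ₀ < 1/2) :
    ∫ x in (0:ℝ)..(2 * Real.pi),
        cardioidDensity μ ℓ x *
          Real.log (cardioidDensity μ ℓ x / cardioidDensity μ ℓ₀ x)
      = 1 - Real.sqrt (1 - 4 * ℓ^2)
        - (ℓ / ℓ₀) * (1 - Real.sqrt (1 - 4 * ℓ₀^2))
        + Real.log ℓ - Real.log ℓ₀
        + (1/2) * Real.log ((1 + Real.sqrt (1 - 4 * ℓ^2)) / (1 - Real.sqrt (1 - 4 * ℓ^2)))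
        - (1/2) * Real.log ((1 + Real.sqrt (1 - 4 * ℓ₀^2)) / (1 - Real.sqrt (1 - 4 * ℓ₀^2))) := by
  have hℓ : |ℓ| < 1 / 2 := by rwa [abs_of_pos h0]
  have hℓ₀ : |ℓ₀| < 1 / 2 := by rwa [abs_of_pos h0']
  have hI : ∀ ℓ' (_ : |ℓ'| < 1 / 2), IntervalIntegrable
      (fun t => (1 + 2 * ℓ * cos t) * log (1 + 2 * ℓ' * cos t)) volume 0 (2 * π) :=
    fun ℓ' hℓ' => ((by fun_prop : Continuous fun t => 1 + 2 * ℓ * cos t).mul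
      (continuous_log_one_add_two_mul_cos hℓ')).intervalIntegrable _ _
  set g : ℝ → ℝ := fun t => (2 * π)⁻¹ * ((1 + 2 * ℓ * cos t) * log (1 + 2 * ℓ * cos t) -
    (1 + 2 * ℓ * cos t) * log (1 + 2 * ℓ₀ * cos t))
  have hg : Function.Periodic g (2 * π) := fun t => by simp [g, cos_add_two_pi]
  calc _ = ∫ x in 0..2 * π, g (x - μ) :=
        intervalIntegral.integral_congr fun x _ => cardioidDensity_mul_log_div hℓ hℓ₀ μ x
    _ = ∫ t in 0..2 * π, g t := hg.intervalIntegral_comp_sub_eq μ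
    _ = _ := by
      rw [intervalIntegral.integral_const_mul, intervalIntegral.integral_sub (hI ℓ hℓ) (hI ℓ₀ hℓ₀),
        integral_one_add_two_mul_cos_mul_log ℓ hℓ, integral_one_add_two_mul_cos_mul_log ℓ hℓ₀,
        half_mul_log_one_add_sqrt_div_one_sub_sqrt h0.ne' hℓ,
        half_mul_log_one_add_sqrt_div_one_sub_sqrt h0'.ne' hℓ₀, div_self h0.ne']
      field_simp
      ring
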